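/- arXiv:1108.2689 — 6 statements merged into one kernel-verified Lean document; each statement's English description precedes it below -/
import Mathlib

section
/- For every integer b ≥ 0, the polynomial φ_b has degree exactly 2b+1 (i.e. its natDegree equals 2b+1). -/
open Polynomial

/-- For framing `f ≠ 0, -1`, the polynomial `φ_b = D^b φ_0`, with
`D p = (t(t-1)(ft+1)/(f+1)) p'` and `φ_0 = (t-1)/(f+1)`, has degree exactly `2b+1`. -/
theorem phi_b_natDegree (f : ℂ) (hf : f ≠ 0) (hf1 : f ≠ -1)
    (D : Polynomial ℂ → Polynomial ℂ)
    (hD : ∀ p, D p = C ((f + 1)⁻¹) * (X * (X - 1) * (C f * X + 1)) * p.derivative)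
    (φ : ℕ → Polynomial ℂ)
    (hφ0 : φ 0 = C ((f + 1)⁻¹) * (X - 1))
    (hφ : ∀ b, φ (b + 1) = D (φ b)) :
    ∀ b : ℕ, (φ b).natDegree = 2 * b + 1 := by
  have hf1' : f + 1 ≠ 0 := fun h => hf1 (by linear_combination h)
  have hc : ((f + 1)⁻¹ : ℂ) ≠ 0 := inv_ne_zero hf1'
  have hcube : (X * (X - 1) * (C f * X + 1) : Polynomial ℂ).natDegree = 3 := by
    compute_degree!
  intro b
  induction b with
  | zero =>
    have h1 : (X - 1 : Polynomial ℂ) = X - C 1 := by simp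
    rw [hφ0, h1, natDegree_mul (C_ne_zero.mpr hc) (X_sub_C_ne_zero 1), natDegree_C,
      natDegree_X_sub_C]
  | succ b ih =>
    have hpne : φ b ≠ 0 := fun h => by simp [h] at ih
    have hlc : (φ b).leadingCoeff ≠ 0 := leadingCoeff_ne_zero.mpr hpne
    have hcoeff : (derivative (φ b)).coeff (2 * b) ≠ 0 := by
      rw [coeff_derivative]
      have : (φ b).coeff (2 * b + 1) = (φ b).leadingCoeff := by
        rw [leadingCoeff, ih]
      rw [this]
      exact mul_ne_zero hlc (by exact_mod_cast Nat.succ_ne_zero (2 * b))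
    have hdne : derivative (φ b) ≠ 0 := fun h => by simp [h] at hcoeff
    have hdd : (derivative (φ b)).natDegree = 2 * b := by
      refine le_antisymm ?_ (le_natDegree_of_ne_zero hcoeff)
      have := natDegree_derivative_le (φ b)
      omega
    have hcubene : (X * (X - 1) * (C f * X + 1) : Polynomial ℂ) ≠ 0 := fun h => by
      simp [h] at hcube
    rw [hφ, hD, natDegree_mul (mul_ne_zero (C_ne_zero.mpr hc) hcubene) hdne,
      natDegree_mul (C_ne_zero.mpr hc) hcubene, natDegree_C, hcube, hdd]
    ring
end

section
/- For every integer b ≥ 2 and every real R > 1/|f|, the counterclockwise circle integral ∮_{|t|=R} (-Log(1 + 1/(f t)))·(φ_{b-1})'(t) dt equals 0, where (φ_{b-1})' is the formal derivative of the polynomial φ_{b-1} evaluated at t; equivalently, Res_{t=∞}(φ_{-1}(t) dφ_{b-1}(t)) = 0 for all b ≥ 2. -/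
/-!
Write `q = φ (b - 1)`. Since `q = D (φ (b - 2))`, it is divisible by `t (f t + 1)`, and the
derivative of `-Log (1 + 1/(f t))` is `1 / (t (f t + 1))`. Integrating by parts,
`-Log (1 + 1/(f t)) · q'` is therefore the derivative of `-Log (1 + 1/(f t)) · q - P`, where `P`
is a polynomial primitive of `q / (t (f t + 1))`; an exact form has zero integral over the circle.
-/

open Polynomial Metric

namespace Polynomial

theorem derivative_surjective {K : Type*} [Field K] [CharZero K] :
    Function.Surjective (derivative : K[X] →ₗ[K] K[X]) := by
  intro p
  induction p using Polynomial.induction_on' with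
  | add p q hp hq =>
    obtain ⟨P, rfl⟩ := hp
    obtain ⟨Q, rfl⟩ := hq
    exact ⟨P + Q, map_add _ P Q⟩
  | monomial n a =>
    refine ⟨C (a / (n + 1)) * X ^ (n + 1), ?_⟩
    rw [derivative_C_mul, derivative_X_pow, ← C_mul_X_pow_eq_monomial, Nat.add_sub_cancel,
      ← mul_assoc, ← C_mul, Nat.cast_add_one, div_mul_cancel₀ a (Nat.cast_add_one_ne_zero n)]

end Polynomial

theorem circleIntegral_mul_derivative_eval_eq_zero {g g' : ℂ → ℂ} {q r : ℂ[X]} {c : ℂ}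
    {R : ℝ} (hR : 0 ≤ R) (hg : ∀ z ∈ sphere c R, HasDerivAt g (g' z) z)
    (hgq : ∀ z ∈ sphere c R, g' z * q.eval z = r.eval z) :
    (∮ z in C(c, R), g z * q.derivative.eval z) = 0 := by
  obtain ⟨P, hP⟩ := derivative_surjective r
  refine circleIntegral.integral_eq_zero_of_hasDerivWithinAt
    (f := fun z ↦ g z * q.eval z - P.eval z) hR fun z hz ↦ HasDerivAt.hasDerivWithinAt ?_
  refine (((hg z hz).mul (q.hasDerivAt z)).sub (P.hasDerivAt z)).congr_deriv ?_
  rw [hP, ← hgq z hz]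
  ring

theorem mul_mul_add_one_ne_zero_of_one_lt_norm_mul {f z : ℂ} (hfz : 1 < ‖f * z‖) :
    z * (f * z + 1) ≠ 0 := by
  refine mul_ne_zero (right_ne_zero_of_mul (norm_pos_iff.mp (one_pos.trans hfz))) fun h ↦ ?_
  rw [eq_neg_of_add_eq_zero_left h, norm_neg, norm_one] at hfz
  exact lt_irrefl 1 hfz

theorem hasDerivAt_neg_log_one_add_one_div_mul {f z : ℂ} (hfz : 1 < ‖f * z‖) :
    HasDerivAt (fun w ↦ -Complex.log (1 + 1 / (f * w))) (1 / (z * (f * z + 1))) z := by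
  have hfz0 : f * z ≠ 0 := norm_pos_iff.mp (one_pos.trans hfz)
  have hf0 : f ≠ 0 := left_ne_zero_of_mul hfz0
  obtain ⟨hz0, hfz1⟩ := mul_ne_zero_iff.mp (mul_mul_add_one_ne_zero_of_one_lt_norm_mul hfz)
  have hslit : 1 + 1 / (f * z) ∈ Complex.slitPlane := by
    refine Complex.mem_slitPlane_of_norm_lt_one ?_
    rwa [norm_div, norm_one, div_lt_one (one_pos.trans hfz)]
  have hinner : HasDerivAt (fun w ↦ 1 + 1 / (f * w)) (-f / (f * z) ^ 2) z := by
    simpa [one_div] using (((hasDerivAt_id z).const_mul f).inv (by simpa using hfz0)).const_add 1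
  refine ((Complex.hasDerivAt_log hslit).comp z hinner).neg.congr_deriv ?_
  field_simp

theorem residue_phi_neg_one_dphi_b_general (f : ℂ) (hf : f ≠ 0)
    (D : Polynomial ℂ → Polynomial ℂ)
    (hD : ∀ p, D p = C ((f + 1)⁻¹) * (X * (X - 1) * (C f * X + 1)) * p.derivative)
    (φ : ℕ → Polynomial ℂ)
    (hφ : ∀ b, φ (b + 1) = D (φ b)) :
    ∀ b : ℕ, 2 ≤ b → ∀ R : ℝ, 1 / ‖f‖ < R →
      (∮ t in C(0, R),
        (-Complex.log (1 + 1 / (f * t))) * ((φ (b - 1)).derivative.eval t)) = 0 := by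
  intro b hb R hR
  obtain ⟨k, rfl⟩ : ∃ k, b = k + 2 := ⟨b - 2, by omega⟩
  rw [show k + 2 - 1 = k + 1 from rfl]
  set r : ℂ[X] := C ((f + 1)⁻¹) * (X - 1) * (φ k).derivative
  have hφr : φ (k + 1) = X * (C f * X + 1) * r := by
    rw [hφ, hD]
    ring
  have hfR : 1 < ‖f‖ * R := (div_lt_iff₀' (norm_pos_iff.mpr hf)).mp hR
  have hR0 : 0 ≤ R := (pos_of_mul_pos_right (one_pos.trans hfR) (norm_nonneg f)).le
  have hnorm : ∀ z ∈ sphere (0 : ℂ) R, 1 < ‖f * z‖ := fun z hz ↦ by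
    rwa [norm_mul, mem_sphere_zero_iff_norm.mp hz]
  refine circleIntegral_mul_derivative_eval_eq_zero (r := r) hR0
    (fun z hz ↦ hasDerivAt_neg_log_one_add_one_div_mul (hnorm z hz)) fun z hz ↦ ?_
  simp only [hφr, eval_mul, eval_X, eval_add, eval_C, eval_one]
  rw [← mul_assoc, one_div_mul_cancel (mul_mul_add_one_ne_zero_of_one_lt_norm_mul (hnorm z hz)),
    one_mul]

/-- For every `b ≥ 2` and `R > 1/|f|`,
`∮_{|t|=R} (-Log(1 + 1/(ft))) · φ_{b-1}'(t) dt = 0`; equivalently,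
`Res_{t=∞}(φ_{-1}(t) dφ_{b-1}(t)) = 0` for all `b ≥ 2`. -/
theorem residue_phi_neg_one_dphi_b (f : ℂ) (hf : f ≠ 0) (hf1 : f ≠ -1)
    (D : Polynomial ℂ → Polynomial ℂ)
    (hD : ∀ p, D p = C ((f + 1)⁻¹) * (X * (X - 1) * (C f * X + 1)) * p.derivative)
    (φ : ℕ → Polynomial ℂ)
    (hφ0 : φ 0 = C ((f + 1)⁻¹) * (X - 1))
    (hφ : ∀ b, φ (b + 1) = D (φ b)) :
    ∀ b : ℕ, 2 ≤ b → ∀ R : ℝ, 1 / ‖f‖ < R →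
      (∮ t in C(0, R),
        (-Complex.log (1 + 1 / (f * t))) * ((φ (b - 1)).derivative.eval t)) = 0 :=
  residue_phi_neg_one_dphi_b_general f hf D hD φ hφ
end

section
/- For every integer m ≥ 1 and every real R > 1/|f|, the counterclockwise circle integral ∮_{|t|=R} φ_m(t)/(t(f t+1)) dt equals 0, where φ_m(t) denotes the evaluation at t of the polynomial φ_m. -/
/-!
Every `φ_m` with `m ≥ 1` lies in the image of `D`, whose values are all divisible by
`t (f t + 1)`. Since `1 / |f| < R`, neither `0` nor `-1/f` lies on the circle `|t| = R`, so there
the integrand agrees with a polynomial, whose circle integral vanishes by Cauchy's theorem.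
-/

open Polynomial Metric

theorem Polynomial.circleIntegral_eval_eq_zero (p : ℂ[X]) (c : ℂ) {R : ℝ} (hR : 0 ≤ R) :
    (∮ z in C(c, R), p.eval z) = 0 :=
  p.differentiable.diffContOnCl.circleIntegral_eq_zero hR

theorem Polynomial.eval_div_eval_eq_of_eq_mul {p g q : ℂ[X]} (h : p = g * q) {t : ℂ}
    (hg : g.eval t ≠ 0) : p.eval t / g.eval t = q.eval t := by
  rw [h, eval_mul, mul_div_cancel_left₀ _ hg]

theorem mul_mul_add_one_ne_zero_of_mem_sphere {f t : ℂ} {R : ℝ} (hR : 1 / ‖f‖ < R)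
    (ht : t ∈ sphere (0 : ℂ) R) : t * (f * t + 1) ≠ 0 := by
  rw [mem_sphere_zero_iff_norm] at ht
  have hR0 : 0 < R := (one_div_nonneg.mpr (norm_nonneg f)).trans_lt hR
  have hft : ‖f * t‖ ≠ 1 := by
    rcases eq_or_ne f 0 with rfl | hf
    · simp
    · rw [norm_mul, ht]
      exact ((div_lt_iff₀' (norm_pos_iff.mpr hf)).mp hR).ne'
  refine mul_ne_zero (fun h0 => ?_) (fun h1 => hft ?_)
  · rw [h0, norm_zero] at ht
    exact hR0.ne ht
  · rw [eq_neg_of_add_eq_zero_left h1, norm_neg, norm_one]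

theorem circleIntegral_phi_m_div_general (f : ℂ)
    (D : Polynomial ℂ → Polynomial ℂ)
    (hD : ∀ p, D p = C ((f + 1)⁻¹) * (X * (X - 1) * (C f * X + 1)) * p.derivative)
    (φ : ℕ → Polynomial ℂ)
    (hφ : ∀ b, φ (b + 1) = D (φ b)) :
    ∀ m : ℕ, 1 ≤ m → ∀ R : ℝ, 1 / ‖f‖ < R →
      (∮ t in C(0, R), (φ m).eval t / (t * (f * t + 1))) = 0 := by
  intro m hm R hR
  obtain ⟨n, rfl⟩ := Nat.exists_eq_add_of_le' hm
  have hR0 : 0 ≤ R := (one_div_nonneg.mpr (norm_nonneg f)).trans hR.le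
  set q : ℂ[X] := C ((f + 1)⁻¹) * (X - 1) * (φ n).derivative
  have hdvd : φ (n + 1) = X * (C f * X + 1) * q := by
    rw [hφ, hD]
    ring
  have hcongr : Set.EqOn (fun t => (φ (n + 1)).eval t / (t * (f * t + 1))) q.eval
      (sphere 0 R) := fun t ht => by
    have := eval_div_eval_eq_of_eq_mul hdvd (t := t)
    simp only [eval_mul, eval_X, eval_add, eval_C, eval_one] at this
    exact this (mul_mul_add_one_ne_zero_of_mem_sphere hR ht)
  rw [circleIntegral.integral_congr hR0 hcongr]
  exact q.circleIntegral_eval_eq_zero 0 hR0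

/-- For every `m ≥ 1` and `R > 1/|f|`, `∮_{|t|=R} φ_m(t)/(t(ft+1)) dt = 0`. -/
theorem circleIntegral_phi_m_div (f : ℂ) (hf : f ≠ 0) (hf1 : f ≠ -1)
    (D : Polynomial ℂ → Polynomial ℂ)
    (hD : ∀ p, D p = C ((f + 1)⁻¹) * (X * (X - 1) * (C f * X + 1)) * p.derivative)
    (φ : ℕ → Polynomial ℂ)
    (hφ0 : φ 0 = C ((f + 1)⁻¹) * (X - 1))
    (hφ : ∀ b, φ (b + 1) = D (φ b)) :
    ∀ m : ℕ, 1 ≤ m → ∀ R : ℝ, 1 / ‖f‖ < R →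
      (∮ t in C(0, R), (φ m).eval t / (t * (f * t + 1))) = 0 :=
  circleIntegral_phi_m_div_general f D hD φ hφ
end

section
/- For every t ∈ ℂ with t ≠ 0, the function x is complex differentiable at t with x'(t) = y(t)^{f-1}/((f+1) t³), and (t(t-1)(f t+1)/(f+1))·x'(t) = x(t) (so the vector field x d/dx corresponds to (t(t-1)(f t+1)/(f+1)) d/dt in the coordinate t). Moreover, if in addition t ≠ -1/f, then x'(t) ≠ 0; hence the x-projection of the mirror curve has no ramification point at any finite t in the curve's domain (its unique ramification point is at t = ∞). -/
/-! Writing `c = f + 1`, the coordinate `y = (f t + 1)/(c t)` has `y' = -1/(c t²)` and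
`f - c y = -1/t`, so the product rule `(yᶠ(1 - y))' = yᶠ⁻¹ y' (f - c y)` gives
`x' = yᶠ⁻¹/(c t³)`. Since `y (1 - y) = (f t + 1)(t - 1)/(c t)²`, multiplying `x'` by
`t (t - 1)(f t + 1)/c` recovers `x = yᶠ⁻¹ · y (1 - y)`, and `x'` vanishes only where `y` does,
i.e. at `t = -1/f`. -/

theorem HasDerivAt.pow_mul_one_sub {𝕜 : Type*} [NontriviallyNormedField 𝕜] {u : 𝕜 → 𝕜}
    {u' t : 𝕜} {f : ℕ} (hf : f ≠ 0) (hu : HasDerivAt u u' t) :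
    HasDerivAt (fun s => u s ^ f * (1 - u s))
      (u t ^ (f - 1) * u' * (f - (f + 1) * u t)) t := by
  refine ((hu.pow f).mul ((hasDerivAt_const t 1).sub hu)).congr_deriv ?_
  obtain ⟨k, rfl⟩ := Nat.exists_eq_succ_of_ne_zero hf
  simp only [Nat.succ_sub_one, pow_succ, Pi.sub_apply, Pi.pow_apply]
  push_cast
  ring

namespace MirrorCurve

noncomputable def y (f : ℕ) (s : ℂ) : ℂ := (1 / ((f : ℂ) + 1)) * (1 / s + f)

variable {f : ℕ} {t : ℂ}

lemma y_eq_div (ht : t ≠ 0) : y f t = (f * t + 1) / ((f + 1) * t) := by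
  have := Nat.cast_add_one_ne_zero (R := ℂ) f
  unfold y
  field_simp
  ring

lemma hasDerivAt_y (ht : t ≠ 0) : HasDerivAt (y f) (-1 / ((f + 1) * t ^ 2)) t := by
  have := Nat.cast_add_one_ne_zero (R := ℂ) f
  have hy : y f = fun s => 1 / ((f : ℂ) + 1) * (s⁻¹ + f) := by
    ext s; rw [y, one_div s]
  rw [hy]
  refine (((hasDerivAt_inv ht).add_const (f : ℂ)).const_mul _).congr_deriv ?_
  field_simp

lemma y_deriv_mul_sub (ht : t ≠ 0) :
    -1 / ((f + 1) * t ^ 2) * (f - (f + 1) * y f t) = 1 / ((f + 1) * t ^ 3) := by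
  have := Nat.cast_add_one_ne_zero (R := ℂ) f
  rw [y_eq_div ht]
  field_simp
  ring

lemma y_mul_one_sub_y (ht : t ≠ 0) :
    y f t * (1 - y f t) = t * (t - 1) * (f * t + 1) / (f + 1) * (1 / ((f + 1) * t ^ 3)) := by
  have := Nat.cast_add_one_ne_zero (R := ℂ) f
  rw [y_eq_div ht]
  field_simp
  ring

lemma y_ne_zero (ht : t ≠ 0) (ht' : t ≠ -1 / f) : y f t ≠ 0 := by
  rw [y_eq_div ht]
  refine div_ne_zero (fun h => ht' ?_) (mul_ne_zero (Nat.cast_add_one_ne_zero (R := ℂ) f) ht)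
  rcases eq_or_ne (f : ℂ) 0 with hf | hf
  · simp [hf] at h
  · rw [eq_div_iff hf]
    linear_combination h

end MirrorCurve

open MirrorCurve Filter Topology in
/-- For `t ≠ 0`, with `y(t) = (1/(f+1))(1/t + f)` and `x(t) = y(t)^f (1 - y(t))`, the
function `x` is complex differentiable at `t` with `x'(t) = y(t)^(f-1)/((f+1) t³)`, and
`(t(t-1)(ft+1)/(f+1))·x'(t) = x(t)` (so `x d/dx` corresponds to
`(t(t-1)(ft+1)/(f+1)) d/dt`). Moreover, if also `t ≠ -1/f`, then `x'(t) ≠ 0`: the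
`x`-projection of the mirror curve has no finite ramification point. -/
theorem mirror_curve_x_derivative (f : ℕ) (hf : 1 ≤ f) (t : ℂ) (ht : t ≠ 0)
    (y x : ℂ → ℂ)
    (hy : ∀ s : ℂ, s ≠ 0 → y s = (1 / ((f : ℂ) + 1)) * (1 / s + (f : ℂ)))
    (hx : ∀ s : ℂ, s ≠ 0 → x s = y s ^ f * (1 - y s)) :
    HasDerivAt x (y t ^ (f - 1) / (((f : ℂ) + 1) * t ^ 3)) t ∧
    (t * (t - 1) * ((f : ℂ) * t + 1) / ((f : ℂ) + 1)) *
      (y t ^ (f - 1) / (((f : ℂ) + 1) * t ^ 3)) = x t ∧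
    (t ≠ -1 / (f : ℂ) → y t ^ (f - 1) / (((f : ℂ) + 1) * t ^ 3) ≠ 0) := by
  have hf0 : f ≠ 0 := Nat.one_le_iff_ne_zero.mp hf
  have hyt : y t = MirrorCurve.y f t := hy t ht
  have hxt : x t = MirrorCurve.y f t ^ f * (1 - MirrorCurve.y f t) := by rw [hx t ht, hyt]
  have hx_near : x =ᶠ[𝓝 t] fun s => MirrorCurve.y f s ^ f * (1 - MirrorCurve.y f s) := by
    filter_upwards [eventually_ne_nhds ht] with s hs
    rw [hx s hs, hy s hs, MirrorCurve.y]
  rw [hyt, hxt]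
  refine ⟨?_, ?_, fun ht' => ?_⟩
  · refine (((hasDerivAt_y ht).pow_mul_one_sub hf0).congr_of_eventuallyEq hx_near).congr_deriv ?_
    rw [mul_assoc, y_deriv_mul_sub ht, mul_one_div]
  · obtain ⟨k, rfl⟩ := Nat.exists_eq_succ_of_ne_zero hf0
    rw [Nat.succ_sub_one, pow_succ _ k, mul_assoc (_ ^ k), y_mul_one_sub_y ht]
    ring
  · exact div_ne_zero (pow_ne_zero _ (y_ne_zero ht ht'))
      (mul_ne_zero (Nat.cast_add_one_ne_zero (R := ℂ) f) (pow_ne_zero 3 ht))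
end

section
/- Under these hypotheses, if g ≥ 2 then λ_{g-1}² = 2 λ_g λ_{g-2}, and consequently λ_{g-1}³ = 2 λ_g λ_{g-1} λ_{g-2}. -/
open Polynomial

/- Compare coefficients of `T²`: it vanishes on the right since `2g > 2`, and on the left only
`(i, j) ∈ {(g, g-2), (g-1, g-1), (g-2, g)}` contribute, giving `(-1)^g (2 λ_g λ_{g-2} - λ_{g-1}²) = 0`. -/
theorem Polynomial.coeff_mul_two {R : Type*} [Semiring R] (p q : R[X]) :
    (p * q).coeff 2 = p.coeff 0 * q.coeff 2 + p.coeff 1 * q.coeff 1 + p.coeff 2 * q.coeff 0 := by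
  simp [coeff_mul, Finset.Nat.antidiagonal_succ, add_assoc]

theorem Polynomial.coeff_sum_range_C_mul_X_pow_sub {R : Type*} [Semiring R] (n : ℕ) (f : ℕ → R)
    {m : ℕ} (hm : m ≤ n) :
    (∑ i ∈ Finset.range (n + 1), C (f i) * X ^ (n - i)).coeff m = f (n - m) := by
  simp only [finsetSum_coeff, coeff_C_mul_X_pow]
  rw [Finset.sum_eq_single_of_mem (n - m) (Finset.mem_range.mpr (by omega))
    fun i hi _ => if_neg (by rw [Finset.mem_range] at hi; omega)]
  simp [show n - (n - m) = m by omega]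

theorem lambda_g_sub_one_relations_general (R : Type*) [CommRing R] (g : ℕ) (l : ℕ → R)
    (h : (∑ i ∈ Finset.range (g + 1), C ((-1 : R) ^ i * l i) * X ^ (g - i)) *
         (∑ j ∈ Finset.range (g + 1), C (l j) * X ^ (g - j)) = X ^ (2 * g))
    (hg2 : 2 ≤ g) :
    l (g - 1) ^ 2 = 2 * (l g * l (g - 2)) ∧
    l (g - 1) ^ 3 = 2 * (l g * l (g - 1) * l (g - 2)) := by
  obtain ⟨k, rfl⟩ : ∃ k, g = k + 2 := ⟨g - 2, by omega⟩
  have hcoeff := congrArg (coeff · 2) h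
  simp only [coeff_mul_two, coeff_sum_range_C_mul_X_pow_sub _ _ (show 0 ≤ k + 2 by omega),
    coeff_sum_range_C_mul_X_pow_sub _ _ (show 1 ≤ k + 2 by omega),
    coeff_sum_range_C_mul_X_pow_sub _ _ (show 2 ≤ k + 2 by omega), coeff_X_pow,
    if_neg (show 2 ≠ 2 * (k + 2) by omega)] at hcoeff
  simp only [Nat.add_sub_cancel, show k + 2 - 1 = k + 1 by omega, Nat.sub_zero] at hcoeff ⊢
  have hsigned : (-1 : R) ^ k * (2 * (l (k + 2) * l k) - l (k + 1) ^ 2) = 0 := by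
    linear_combination hcoeff
  have hsq : l (k + 1) ^ 2 = 2 * (l (k + 2) * l k) :=
    (sub_eq_zero.mp (((isUnit_neg_one.pow k).mul_right_eq_zero).mp hsigned)).symm
  exact ⟨hsq, by linear_combination l (k + 1) * hsq⟩

/-- Mumford's relation `(Σ_{i=0}^g (-1)^i λ_i T^{g-i})·(Σ_{j=0}^g λ_j T^{g-j}) = T^{2g}`
in `R[T]` implies, for `g ≥ 2`, that `λ_{g-1}² = 2 λ_g λ_{g-2}`, and consequently
`λ_{g-1}³ = 2 λ_g λ_{g-1} λ_{g-2}`. -/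
theorem lambda_g_sub_one_relations (R : Type*) [CommRing R] (g : ℕ) (hg : 1 ≤ g) (l : ℕ → R)
    (h : (∑ i ∈ Finset.range (g + 1), C ((-1 : R) ^ i * l i) * X ^ (g - i)) *
         (∑ j ∈ Finset.range (g + 1), C (l j) * X ^ (g - j)) = X ^ (2 * g))
    (hg2 : 2 ≤ g) :
    l (g - 1) ^ 2 = 2 * (l g * l (g - 2)) ∧
    l (g - 1) ^ 3 = 2 * (l g * l (g - 1) * l (g - 2)) :=
  lambda_g_sub_one_relations_general R g l h hg2
end

section
/- For every real t ≠ 0: ξ_0(z(t)) = sqrt(2f(f+1))·φ_0(t) + sqrt(2f/(1+f)), and for every integer b ≥ 1, ξ_b(z(t)) = (-1)^b · sqrt(2f(f+1)) · φ_b(t), where φ_b(t) denotes the evaluation of the polynomial φ_b at t. (This identifies Eynard's formula for the correlation functions of the mirror curve of ℂ³ with the Chen–Zhou formula.) -/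
open Polynomial

/-!
In the coordinate `s = 1 / ((f + 1) w - f)`, which inverts `t ↦ z(t)`, the operator
`w (1 - w) / ((f + 1) w - f) · d/dw` becomes `-D`, and `ξ_0` becomes the linear function
`√(2f/(1+f)) · s = √(2f(f+1)) φ_0(s) + √(2f/(1+f))`. Hence `ξ_b(z(t))` is `(-1)^b` times `D^b`
applied to that polynomial, evaluated at `t`; for `b ≥ 1` the constant term is killed by `D`.
-/

noncomputable section

namespace ChenZhou

def opD (f : ℝ) : ℝ[X] →ₗ[ℝ] ℝ[X] :=
  LinearMap.mulLeft ℝ (C (f + 1)⁻¹ * (X * (X - 1) * (C f * X + 1))) ∘ₗ derivative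

lemma opD_apply (f : ℝ) (p : ℝ[X]) :
    opD f p = C (f + 1)⁻¹ * (X * (X - 1) * (C f * X + 1)) * derivative p :=
  rfl

lemma opD_C (f c : ℝ) : opD f (C c) = 0 := by
  simp [opD_apply]

def invZ (f w : ℝ) : ℝ := ((f + 1) * w - f)⁻¹

lemma invZ_z (f t : ℝ) (hf : f + 1 ≠ 0) : invZ f (1 / (f + 1) * (f + 1 / t)) = t := by
  rw [invZ, ← mul_assoc, mul_one_div_cancel hf, one_mul, add_sub_cancel_left, one_div, inv_inv]

lemma hasDerivAt_invZ (f w : ℝ) (hw : invZ f w ≠ 0) :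
    HasDerivAt (invZ f) (-(f + 1) / ((f + 1) * w - f) ^ 2) w := by
  have hu : (f + 1) * w - f ≠ 0 := by simpa only [invZ, ne_eq, inv_eq_zero] using hw
  have h := (((hasDerivAt_id w).const_mul (f + 1)).sub_const f).inv hu
  rwa [mul_one] at h

lemma eventually_invZ_ne_zero (f w : ℝ) (hw : invZ f w ≠ 0) :
    ∀ᶠ x in nhds w, invZ f x ≠ 0 :=
  (hasDerivAt_invZ f w hw).continuousAt.eventually_ne hw

/-- Eynard's vector field `dz/dx · d/dz` is `-D` in the coordinate `invZ`. -/
lemma xDeriv_eval_invZ (f : ℝ) (hf : f + 1 ≠ 0) (p : ℝ[X]) (w : ℝ) (hw : invZ f w ≠ 0) :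
    w * (1 - w) / ((f + 1) * w - f) * deriv (fun x => p.eval (invZ f x)) w
      = -(opD f p).eval (invZ f w) := by
  have hu : (f + 1) * w - f ≠ 0 := by simpa only [invZ, ne_eq, inv_eq_zero] using hw
  have hp : HasDerivAt (fun x => p.eval (invZ f x))
      ((derivative p).eval (invZ f w) * (-(f + 1) / ((f + 1) * w - f) ^ 2)) w :=
    (p.hasDerivAt _).comp w (hasDerivAt_invZ f w hw)
  rw [hp.deriv, opD_apply]
  simp only [eval_mul, eval_C, eval_X, eval_sub, eval_one, eval_add, invZ]
  generalize (derivative p).eval ((f + 1) * w - f)⁻¹ = E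
  have hw_eq : w = ((f + 1) * w - f + f) / (f + 1) := by field_simp; ring
  generalize (f + 1) * w - f = u at hu hw_eq ⊢
  subst hw_eq
  field_simp
  ring

lemma eq_eval_opD_pow_invZ (f : ℝ) (hf : f + 1 ≠ 0) (g : ℕ → ℝ → ℝ) (p : ℝ[X])
    (hg0 : ∀ w, invZ f w ≠ 0 → g 0 w = p.eval (invZ f w))
    (hg : ∀ b w, g (b + 1) w = w * (1 - w) / ((f + 1) * w - f) * deriv (g b) w) (b : ℕ) :
    ∀ w, invZ f w ≠ 0 → g b w = (-1) ^ b * ((opD f ^ b) p).eval (invZ f w) := by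
  induction b with
  | zero => simpa using hg0
  | succ b ih =>
    intro w hw
    have hgb : g b =ᶠ[nhds w] fun x => (-1) ^ b * ((opD f ^ b) p).eval (invZ f x) := by
      filter_upwards [eventually_invZ_ne_zero f w hw] with x hx using ih x hx
    rw [hg, hgb.deriv_eq, deriv_const_mul_field', mul_left_comm,
      xDeriv_eval_invZ f hf _ w hw, pow_succ' (opD f), Module.End.mul_apply]
    ring

lemma opD_pow_succ_smul_add_C (f a c : ℝ) (p : ℝ[X]) (b : ℕ) :
    (opD f ^ (b + 1)) (C a * p + C c) = a • (opD f ^ (b + 1)) p := by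
  rw [pow_succ, Module.End.mul_apply, Module.End.mul_apply, map_add, opD_C, add_zero,
    ← smul_eq_C_mul, map_smul, map_smul]

end ChenZhou

lemma Real.sqrt_mul_eq_sqrt_div_mul (a : ℝ) {b : ℝ} (hb : 0 < b) : √(a * b) = √(a / b) * b := by
  rw [← Real.sqrt_sq hb.le, ← Real.sqrt_mul' _ (sq_nonneg b), Real.sqrt_sq hb.le]
  field_simp

lemma Real.sqrt_div_pow_three (a : ℝ) {b : ℝ} (hb : 0 < b) : √(a / b ^ 3) = √(a / b) / b := by
  rw [pow_succ', ← div_div, Real.sqrt_div' _ (sq_nonneg b), Real.sqrt_sq hb.le]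

end

open ChenZhou in
/-- Identification of Eynard's `ξ_b` (the `b`-th `x`-derivative of `ξ_0`) with the
Chen–Zhou polynomials `φ_b`: for real `t ≠ 0`,
`ξ_0(z(t)) = √(2f(f+1)) φ_0(t) + √(2f/(1+f))` and, for `b ≥ 1`,
`ξ_b(z(t)) = (-1)^b √(2f(f+1)) φ_b(t)`. -/
theorem eynard_xi_eq_chen_zhou_phi (f : ℝ) (hf : 0 < f)
    (D : Polynomial ℝ → Polynomial ℝ)
    (hD : ∀ p, D p = C ((f + 1)⁻¹) * (X * (X - 1) * (C f * X + 1)) * p.derivative)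
    (φ : ℕ → Polynomial ℝ)
    (hφ0 : φ 0 = C ((f + 1)⁻¹) * (X - 1))
    (hφ : ∀ b, φ (b + 1) = D (φ b))
    (z : ℝ → ℝ) (hz : ∀ t : ℝ, t ≠ 0 → z t = (1 / (f + 1)) * (f + 1 / t))
    (ξ : ℕ → ℝ → ℝ)
    (hξ0 : ∀ w : ℝ, ξ 0 w = Real.sqrt (2 * f / (1 + f) ^ 3) / (w - f / (f + 1)))
    (hξ : ∀ b : ℕ, ∀ w : ℝ,
      ξ (b + 1) w = (w * (1 - w) / ((f + 1) * w - f)) * deriv (ξ b) w) :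
    ∀ t : ℝ, t ≠ 0 →
      ξ 0 (z t) = Real.sqrt (2 * f * (f + 1)) * (φ 0).eval t + Real.sqrt (2 * f / (1 + f)) ∧
      ∀ b : ℕ, 1 ≤ b →
        ξ b (z t) = (-1 : ℝ) ^ b * Real.sqrt (2 * f * (f + 1)) * (φ b).eval t := by
  have hf1 : 0 < f + 1 := by linarith
  have hφ_pow : ∀ b, φ b = (opD f ^ b) (φ 0) := fun b => by
    induction b with
    | zero => rfl
    | succ b ih => rw [hφ, hD, ih, pow_succ', Module.End.mul_apply, opD_apply]
  set c := √(2 * f / (1 + f))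
  have hc : √(2 * f * (f + 1)) = c * (f + 1) := by
    rw [Real.sqrt_mul_eq_sqrt_div_mul _ hf1, add_comm f]
  have hξ0' : ∀ w, invZ f w ≠ 0 → ξ 0 w = (C (c * (f + 1)) * φ 0 + C c).eval (invZ f w) := by
    intro w _
    rw [hξ0, add_comm 1 f, Real.sqrt_div_pow_three _ hf1, ← add_comm 1 f, hφ0, invZ]
    simp only [eval_add, eval_mul, eval_C, eval_sub, eval_X, eval_one]
    field_simp
    ring
  intro t ht
  have hzt : invZ f (z t) = t := by rw [hz t ht, invZ_z f t hf1.ne']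
  have hξ_pow := eq_eval_opD_pow_invZ f hf1.ne' ξ _ hξ0' hξ
  refine ⟨?_, fun b hb => ?_⟩
  · rw [hξ_pow 0 _ (by rwa [hzt]), hzt, hc]
    simp
  · obtain ⟨b, rfl⟩ := Nat.exists_eq_add_of_le' hb
    rw [hξ_pow _ _ (by rwa [hzt]), hzt, opD_pow_succ_smul_add_C, ← hφ_pow, hc, eval_smul, smul_eq_mul]
    ring
end
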